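/- Let (X_n) be a Markov chain on Ω with a drift function f satisfying condition (D): E_x[f(X₁)] ≤ f(x) − λ₁ whenever f(x) > R₀, and (M_η): E_x[|f(X₁)−f(x)|^{1+η}] < M for all x, with η ∈ (0,1). Then for all x ∈ Ω with f(x) > R₀, E_x[f(X₁)^{1+η}] ≤ f(x)^{1+η} − (1+η)λ₁ f(x)^η + M. -/

import Mathlib

open MeasureTheory Set
open scoped ENNReal

/-
For `a, b ≥ 0` and `0 ≤ η ≤ 1` one has the one-sided Taylor bound
`b^(1+η) ≤ a^(1+η) + (1+η) a^η (b - a) + |b - a|^(1+η)`: on either side of `a` the difference is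
monotone in `b`, because its derivative has a sign by subadditivity of `t ↦ t^η`. Taking
`a = f x`, `b = f X₁` and integrating, (D) bounds the linear term and (M_η) the last one. The
integrals live in `ℝ≥0∞`, so the term `(1+η) a^η a` is cancelled by adding it to both sides.
When `f x < λ₁`, (D) instead forces `f X₁ = 0` almost surely.
-/

def IsMarkovChainFamily {Ω : Type*} [MeasurableSpace Ω] (P : Ω → Measure (ℕ → Ω)) : Prop :=
  (∀ x, IsProbabilityMeasure (P x)) ∧
  (∀ x, P x {ω | ω 0 = x} = 1) ∧
  (∀ (x : Ω) (n : ℕ) (B : Set (ℕ → Ω)), MeasurableSet B →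
    ∀ C : Set (ℕ → Ω), MeasurableSet C →
      (∀ ω ω' : ℕ → Ω, (∀ k ≤ n, ω k = ω' k) → (ω ∈ C ↔ ω' ∈ C)) →
      P x (C ∩ {ω | (fun k => ω (n + k)) ∈ B}) = ∫⁻ ω in C, P (ω n) B ∂ P x)

theorem hasDerivAt_rpow_one_add (η t : ℝ) (hη : 0 ≤ η) :
    HasDerivAt (fun t : ℝ => t ^ (1 + η)) ((1 + η) * t ^ η) t := by
  simpa using Real.hasDerivAt_rpow_const (x := t) (p := 1 + η) (Or.inr (by linarith))

theorem add_rpow_one_add_le {η a s : ℝ} (hη0 : 0 ≤ η) (hη1 : η ≤ 1) (ha : 0 ≤ a) (hs : 0 ≤ s) :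
    (a + s) ^ (1 + η) ≤ a ^ (1 + η) + (1 + η) * a ^ η * s + s ^ (1 + η) := by
  let φ : ℝ → ℝ := fun t => (a + t) ^ (1 + η) - (1 + η) * a ^ η * t - t ^ (1 + η)
  have hφ : ∀ t, HasDerivAt φ
      ((1 + η) * (a + t) ^ η * 1 - (1 + η) * a ^ η * 1 - (1 + η) * t ^ η) t :=
    fun t => (((hasDerivAt_rpow_one_add η _ hη0).comp t ((hasDerivAt_id t).const_add a)).sub
      ((hasDerivAt_id t).const_mul _)).sub (hasDerivAt_rpow_one_add η t hη0)
  have hanti : AntitoneOn φ (Ici 0) := by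
    refine antitoneOn_of_hasDerivWithinAt_nonpos (convex_Ici 0)
      (fun t _ => (hφ t).continuousAt.continuousWithinAt) (fun t _ => (hφ t).hasDerivWithinAt) ?_
    intro t ht
    rw [interior_Ici] at ht
    have := Real.rpow_add_le_add_rpow ha ht.le hη0 hη1
    nlinarith
  have := hanti self_mem_Ici hs hs
  simp only [φ, add_zero, mul_zero, sub_zero] at this
  rw [Real.zero_rpow (by linarith)] at this
  linarith

theorem sub_rpow_one_add_le {η a s : ℝ} (hη0 : 0 ≤ η) (hη1 : η ≤ 1) (hs : 0 ≤ s) (hsa : s ≤ a) :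
    (a - s) ^ (1 + η) ≤ a ^ (1 + η) - (1 + η) * a ^ η * s + s ^ (1 + η) := by
  let φ : ℝ → ℝ := fun t => (a - t) ^ (1 + η) + (1 + η) * a ^ η * t - t ^ (1 + η)
  have hφ : ∀ t, HasDerivAt φ
      ((1 + η) * (a - t) ^ η * (-1) + (1 + η) * a ^ η * 1 - (1 + η) * t ^ η) t :=
    fun t => (((hasDerivAt_rpow_one_add η _ hη0).comp t ((hasDerivAt_id t).const_sub a)).add
      ((hasDerivAt_id t).const_mul _)).sub (hasDerivAt_rpow_one_add η t hη0)
  have hanti : AntitoneOn φ (Icc 0 a) := by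
    refine antitoneOn_of_hasDerivWithinAt_nonpos (convex_Icc 0 a)
      (fun t _ => (hφ t).continuousAt.continuousWithinAt) (fun t _ => (hφ t).hasDerivWithinAt) ?_
    intro t ht
    rw [interior_Icc] at ht
    have := Real.rpow_add_le_add_rpow (by linarith [ht.2] : 0 ≤ a - t) ht.1.le hη0 hη1
    rw [sub_add_cancel] at this
    nlinarith
  have := hanti (left_mem_Icc.2 (hs.trans hsa)) ⟨hs, hsa⟩ hs
  simp only [φ, sub_zero, mul_zero, add_zero] at this
  rw [Real.zero_rpow (by linarith)] at this
  linarith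

theorem rpow_one_add_le_tangent_add_abs_sub_rpow {η a b : ℝ} (hη0 : 0 ≤ η) (hη1 : η ≤ 1)
    (ha : 0 ≤ a) (hb : 0 ≤ b) :
    b ^ (1 + η) ≤ a ^ (1 + η) + (1 + η) * a ^ η * (b - a) + |b - a| ^ (1 + η) := by
  rcases le_total a b with hab | hba
  · rw [abs_of_nonneg (sub_nonneg.2 hab)]
    simpa using add_rpow_one_add_le hη0 hη1 ha (sub_nonneg.2 hab)
  · rw [abs_sub_comm, abs_of_nonneg (sub_nonneg.2 hba)]
    have := sub_rpow_one_add_le hη0 hη1 (sub_nonneg.2 hba) (sub_le_self a hb)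
    rw [sub_sub_cancel] at this
    linarith

theorem ofReal_rpow_one_add_add_le {η a b : ℝ} (hη0 : 0 ≤ η) (hη1 : η ≤ 1) (ha : 0 ≤ a)
    (hb : 0 ≤ b) :
    ENNReal.ofReal (b ^ (1 + η)) + ENNReal.ofReal ((1 + η) * a ^ η * a) ≤
      ENNReal.ofReal (a ^ (1 + η)) + ENNReal.ofReal ((1 + η) * a ^ η) * ENNReal.ofReal b +
        ENNReal.ofReal (|b - a| ^ (1 + η)) := by
  have hk : 0 ≤ (1 + η) * a ^ η := by positivity
  rw [← ENNReal.ofReal_add (by positivity) (by positivity), ← ENNReal.ofReal_mul hk,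
    ← ENNReal.ofReal_add (by positivity) (by positivity),
    ← ENNReal.ofReal_add (by positivity) (by positivity)]
  refine ENNReal.ofReal_le_ofReal ?_
  linarith [rpow_one_add_le_tangent_add_abs_sub_rpow hη0 hη1 ha hb]

section
variable {α : Type*} [MeasurableSpace α] {μ : Measure α} [IsProbabilityMeasure μ] {g : α → ℝ}
  {η a lam M : ℝ}

theorem lintegral_ofReal_rpow_one_add_le_of_le (hg : Measurable g) (hg0 : ∀ ω, 0 ≤ g ω)
    (hη0 : 0 ≤ η) (hη1 : η ≤ 1) (ha : 0 ≤ a) (hM : 0 ≤ M) (hlam : lam ≤ a)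
    (hmean : ∫⁻ ω, ENNReal.ofReal (g ω) ∂μ ≤ ENNReal.ofReal (a - lam))
    (hmom : ∫⁻ ω, ENNReal.ofReal (|g ω - a| ^ (1 + η)) ∂μ ≤ ENNReal.ofReal M) :
    ∫⁻ ω, ENNReal.ofReal (g ω ^ (1 + η)) ∂μ ≤
      ENNReal.ofReal (a ^ (1 + η) - (1 + η) * lam * a ^ η + M) := by
  set k := (1 + η) * a ^ η with hk_def
  have hk : 0 ≤ k := by positivity
  have hmg : Measurable fun ω => ENNReal.ofReal (g ω) := hg.ennreal_ofReal
  have hmabs : Measurable fun ω => ENNReal.ofReal (|g ω - a| ^ (1 + η)) := by fun_prop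
  refine (ENNReal.add_le_add_iff_right (ENNReal.ofReal_ne_top (r := k * a))).mp ?_
  calc ∫⁻ ω, ENNReal.ofReal (g ω ^ (1 + η)) ∂μ + ENNReal.ofReal (k * a)
      = ∫⁻ ω, (ENNReal.ofReal (g ω ^ (1 + η)) + ENNReal.ofReal (k * a)) ∂μ := by
        rw [lintegral_add_right _ measurable_const, lintegral_const, measure_univ, mul_one]
    _ ≤ ∫⁻ ω, (ENNReal.ofReal (a ^ (1 + η)) + ENNReal.ofReal k * ENNReal.ofReal (g ω) +
          ENNReal.ofReal (|g ω - a| ^ (1 + η))) ∂μ :=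
        lintegral_mono fun ω => ofReal_rpow_one_add_add_le hη0 hη1 ha (hg0 ω)
    _ = ENNReal.ofReal (a ^ (1 + η)) + ENNReal.ofReal k * ∫⁻ ω, ENNReal.ofReal (g ω) ∂μ +
          ∫⁻ ω, ENNReal.ofReal (|g ω - a| ^ (1 + η)) ∂μ := by
        rw [lintegral_add_right _ hmabs, lintegral_add_right _ (hmg.const_mul _),
          lintegral_const, measure_univ, mul_one, lintegral_const_mul _ hmg]
    _ ≤ ENNReal.ofReal (a ^ (1 + η)) + ENNReal.ofReal k * ENNReal.ofReal (a - lam) +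
          ENNReal.ofReal M := by gcongr
    _ = ENNReal.ofReal ((a ^ (1 + η) - (1 + η) * lam * a ^ η + M) + k * a) := by
        rw [← ENNReal.ofReal_mul hk, ← ENNReal.ofReal_add (by positivity)
          (mul_nonneg hk (sub_nonneg.2 hlam)), ← ENNReal.ofReal_add (by positivity) hM]
        rw [hk_def]; ring_nf
    _ ≤ ENNReal.ofReal (a ^ (1 + η) - (1 + η) * lam * a ^ η + M) + ENNReal.ofReal (k * a) :=
        ENNReal.ofReal_add_le

theorem lintegral_ofReal_rpow_one_add_le (hg : Measurable g) (hg0 : ∀ ω, 0 ≤ g ω)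
    (hη0 : 0 ≤ η) (hη1 : η ≤ 1) (ha : 0 ≤ a) (hM : 0 ≤ M)
    (hmean : ∫⁻ ω, ENNReal.ofReal (g ω) ∂μ ≤ ENNReal.ofReal (a - lam))
    (hmom : ∫⁻ ω, ENNReal.ofReal (|g ω - a| ^ (1 + η)) ∂μ ≤ ENNReal.ofReal M) :
    ∫⁻ ω, ENNReal.ofReal (g ω ^ (1 + η)) ∂μ ≤
      ENNReal.ofReal (a ^ (1 + η) - (1 + η) * lam * a ^ η + M) := by
  rcases le_or_gt lam a with hlam | hlam
  · exact lintegral_ofReal_rpow_one_add_le_of_le hg hg0 hη0 hη1 ha hM hlam hmean hmom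
  have hzero : ∀ᵐ ω ∂μ, g ω = 0 := by
    rw [ENNReal.ofReal_of_nonpos (by linarith), nonpos_iff_eq_zero,
      lintegral_eq_zero_iff hg.ennreal_ofReal] at hmean
    filter_upwards [hmean] with ω hω
    exact le_antisymm (ENNReal.ofReal_eq_zero.1 hω) (hg0 ω)
  have hpow : ∀ᵐ ω ∂μ, ENNReal.ofReal (g ω ^ (1 + η)) = 0 := by
    filter_upwards [hzero] with ω hω
    rw [hω, Real.zero_rpow (by linarith), ENNReal.ofReal_zero]
  rw [lintegral_congr_ae hpow, lintegral_zero]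
  exact zero_le

end

theorem stmt7 {Ω : Type*} [MeasurableSpace Ω] (P : Ω → Measure (ℕ → Ω))
    (hP : IsMarkovChainFamily P)
    (f : Ω → ℝ) (hf : Measurable f) (hf0 : ∀ x, 0 ≤ f x)
    (η : ℝ) (hη : η ∈ Set.Ioo (0:ℝ) 1)
    (R₀ lam₁ M : ℝ) (hM : 0 < M)
    (hdrift : ∀ x, R₀ < f x →
      ∫⁻ ω, ENNReal.ofReal (f (ω 1)) ∂ P x ≤ ENNReal.ofReal (f x - lam₁))
    (hMη : ∀ x, ∫⁻ ω, ENNReal.ofReal (|f (ω 1) - f x| ^ (1 + η)) ∂ P x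
      < ENNReal.ofReal M) :
    ∀ x, R₀ < f x →
      ∫⁻ ω, ENNReal.ofReal (f (ω 1) ^ (1 + η)) ∂ P x
        ≤ ENNReal.ofReal (f x ^ (1 + η) - (1 + η) * lam₁ * f x ^ η + M) := by
  intro x hx
  have := hP.1 x
  exact lintegral_ofReal_rpow_one_add_le (hf.comp (measurable_pi_apply 1)) (fun ω => hf0 (ω 1))
    hη.1.le hη.2.le (hf0 x) hM.le (hdrift x hx) (hMη x).le
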